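/- arXiv:0806.2033 — 3 statements merged into one kernel-verified Lean document; each statement's English description precedes it below -/
import Mathlib

section
/- Let H be a Hilbert space, (v_i)_{i∈I} a family of operators on H such that each v_i* is an isometry (v_i v_i* = 1) and the ranges of the v_i* are pairwise orthogonal (v_i v_j* = 0 for i ≠ j). If Ω is a unit vector with v_iΩ = 0 for all i and the closed span of {v_{i₁}*⋯v_{i_n}*Ω : n ≥ 0} is all of H, then the sum ∑_i v_i* v_i converges in the strong operator topology to 1 − P_Ω, where P_Ω is the orthogonal projection onto the span of Ω. -/
/-!
The operators `P i = (v i)† ∘ v i` are mutually orthogonal projections, so every finite partial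
sum of `∑ P i` is a projection, hence a contraction. The vectors `x` for which `∑ P i x` converges
to `x - ⟪Ω, x⟫ Ω` therefore form a closed subspace. It contains `Ω`, where both sides vanish, and
every `(v j)† y`, where only the term `P j (v j)† y = (v j)† y` survives while
`⟪Ω, (v j)† y⟫ = ⟪v j Ω, y⟫ = 0`; by cyclicity of `Ω` it is all of `H`.
-/

open scoped InnerProductSpace NNReal

theorem ContinuousLinearMap.hasSum_apply_of_dense_span {𝕜 E F ι : Type*} [NontriviallyNormedField 𝕜]
    [NormedAddCommGroup E] [NormedSpace 𝕜 E] [NormedAddCommGroup F] [NormedSpace 𝕜 F]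
    {T : ι → E →L[𝕜] F} {L : E →L[𝕜] F} {C : ℝ≥0} (hT : ∀ s : Finset ι, ‖∑ i ∈ s, T i‖₊ ≤ C)
    {S : Set E} (hS : (Submodule.span 𝕜 S).topologicalClosure = ⊤)
    (h : ∀ x ∈ S, HasSum (fun i ↦ T i x) (L x)) (x : E) : HasSum (fun i ↦ T i x) (L x) := by
  let M : Submodule 𝕜 E :=
    { carrier := {x | HasSum (fun i ↦ T i x) (L x)}
      zero_mem' := by simp [hasSum_zero]
      add_mem' := fun {a b} ha hb ↦ by simpa using ha.add hb
      smul_mem' := fun c a ha ↦ by simpa using ha.const_smul c }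
  have hM : IsClosed (M : Set E) := by
    have hequi : Equicontinuous fun (s : Finset ι) (x : E) ↦ ∑ i ∈ s, T i x :=
      (LipschitzWith.uniformEquicontinuous _ C fun s ↦ by
        have hs : (fun x ↦ ∑ i ∈ s, T i x) = ⇑(∑ i ∈ s, T i) := by ext; simp
        exact hs ▸ (∑ i ∈ s, T i).lipschitz.weaken (hT s)).equicontinuous
    exact hequi.isClosed_setOfPred_tendsto L.continuous
  have hSM : Submodule.span 𝕜 S ≤ M := Submodule.span_le.mpr h
  have hM_top : ⊤ ≤ M := hS ▸ Submodule.topologicalClosure_minimal _ hSM hM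
  exact hM_top Submodule.mem_top

theorem isStarProjection_sum_star_mul {R ι : Type*} [Semiring R] [StarRing R] [DecidableEq ι]
    {a : ι → R} (ha : ∀ i j, a i * star (a j) = if i = j then 1 else 0) (s : Finset ι) :
    IsStarProjection (∑ i ∈ s, star (a i) * a i) := by
  have hmul : ∀ i j, star (a i) * a i * (star (a j) * a j) =
      if i = j then star (a i) * a i else 0 := fun i j ↦ by
    rw [mul_assoc, ← mul_assoc (a i), ha]
    split_ifs with h
    · rw [one_mul, h]
    · rw [zero_mul, mul_zero]
  have hproj : ∀ i, IsStarProjection (star (a i) * a i) := fun i ↦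
    ⟨(hmul i i).trans (if_pos rfl), by simp [IsSelfAdjoint]⟩
  induction s using Finset.induction_on with
  | empty => simp [IsStarProjection.zero]
  | insert j s hj ih =>
    rw [Finset.sum_insert hj]
    refine (hproj j).add ih ?_
    rw [Finset.mul_sum]
    exact Finset.sum_eq_zero fun i hi ↦ by rw [hmul, if_neg (by rintro rfl; exact hj hi)]

section IsometryFamily

open ContinuousLinearMap

variable {H I : Type*} [NormedAddCommGroup H] [InnerProductSpace ℂ H] [CompleteSpace H]
  [DecidableEq I] {v : I → H →L[ℂ] H}

theorem apply_adjoint_apply_eq_ite (hvv : ∀ i j, v i ∘L adjoint (v j) = if i = j then 1 else 0)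
    (i j : I) (y : H) : v i (adjoint (v j) y) = if i = j then y else 0 := by
  rw [← comp_apply, hvv]
  split_ifs <;> rfl

theorem nnnorm_sum_adjoint_comp_le_one
    (hvv : ∀ i j, v i ∘L adjoint (v j) = if i = j then 1 else 0) (s : Finset I) :
    ‖∑ i ∈ s, adjoint (v i) ∘L v i‖₊ ≤ 1 := by
  have hstar : ∀ i j, v i * star (v j) = if i = j then 1 else 0 := by
    simpa only [star_eq_adjoint, mul_def] using hvv
  simpa [← NNReal.coe_le_coe, star_eq_adjoint, mul_def] using
    (isStarProjection_sum_star_mul hstar s).norm_le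

theorem hasSum_adjoint_apply_apply_adjoint
    (hvv : ∀ i j, v i ∘L adjoint (v j) = if i = j then 1 else 0) (j : I) (y : H) :
    HasSum (fun i ↦ adjoint (v i) (v i (adjoint (v j) y))) (adjoint (v j) y) := by
  convert hasSum_ite_eq j (adjoint (v j) y) using 1
  ext i
  rw [apply_adjoint_apply_eq_ite hvv]
  split_ifs with h
  · rw [h]
  · rw [map_zero]

end IsometryFamily

/-- If `(v i)` is a family of operators on a Hilbert space `H` such that the
`v i *` are isometries with pairwise orthogonal ranges (`v i (v j)* = δ_{ij} 1`),
`Ω` is a unit vector annihilated by every `v i` and cyclic for the family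
`{v i *}`, then `∑ i (v i)* (v i)` converges in the strong operator topology
to `1 − P_Ω`, where `P_Ω` is the orthogonal projection onto `ℂ Ω`. -/
theorem sum_adjoint_mul_eq_one_sub_vacuum_projection
    {H : Type*} [NormedAddCommGroup H] [InnerProductSpace ℂ H]
    [CompleteSpace H] {I : Type*} [DecidableEq I] (v : I → H →L[ℂ] H)
    (hvv : ∀ i j : I, v i ∘L ContinuousLinearMap.adjoint (v j)
        = if i = j then 1 else 0)
    (Ω : H) (hΩ : ‖Ω‖ = 1) (hann : ∀ i, v i Ω = 0)
    (hcyc : (Submodule.span ℂ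
        {x : H | ∃ L : List I,
          x = (L.map fun i => ContinuousLinearMap.adjoint (v i)).prod Ω}
        ).topologicalClosure = ⊤) :
    ∀ x : H,
      HasSum (fun i : I => ContinuousLinearMap.adjoint (v i) (v i x))
        (x - ⟪Ω, x⟫_ℂ • Ω) := by
  refine ContinuousLinearMap.hasSum_apply_of_dense_span
    (T := fun i ↦ ContinuousLinearMap.adjoint (v i) ∘L v i)
    (L := 1 - (innerSL ℂ Ω).smulRight Ω) (nnnorm_sum_adjoint_comp_le_one hvv) hcyc ?_
  rintro _ ⟨L, rfl⟩
  cases L with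
  | nil => simp [hann, hΩ, hasSum_zero]
  | cons j L =>
    have hperp : ∀ y, ⟪Ω, ContinuousLinearMap.adjoint (v j) y⟫_ℂ = 0 := fun y ↦ by
      rw [ContinuousLinearMap.adjoint_inner_right, hann, inner_zero_left]
    simpa [hperp] using hasSum_adjoint_apply_apply_adjoint hvv j _
end

section
/- Let q ∈ ℝ, |q| < 1. The q-annihilation operator a_i on the q-Fock space satisfies a_iΩ = 0 and a_i(f₁⊗⋯⊗f_n) = ∑_{k=1}^n q^{k−1}⟨f_k, e_i⟩ f₁⊗⋯⊗f_{k−1}⊗f_{k+1}⊗⋯⊗f_n, and is the adjoint of the creation operator a_i⁺ (given by a_i⁺(f₁⊗⋯⊗f_n) = e_i⊗f₁⊗⋯⊗f_n) with respect to the q-inner product: ⟨a_i⁺ξ, η⟩_q = ⟨ξ, a_i η⟩_q for all ξ ∈ H^{⊗n}, η ∈ H^{⊗(n+1)}. -/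
open scoped InnerProductSpace

/-- The number of inversions of a permutation `π` of `{0, …, n−1}`. -/
def inversions {n : ℕ} (π : Equiv.Perm (Fin n)) : ℕ :=
  ((Finset.univ : Finset (Fin n × Fin n)).filter
    fun p => p.1 < p.2 ∧ π p.2 < π p.1).card

/-- The `q`-inner product of simple tensors, represented by tuples:
`⟨f₁⊗⋯⊗f_n, g₁⊗⋯⊗g_n⟩_q = ∑_{π ∈ S_n} q^{i(π)} ∏_j ⟨f_j, g_{π(j)}⟩`
(conjugate-linear in the first argument). -/
noncomputable def qInner {H : Type*} [NormedAddCommGroup H]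
    [InnerProductSpace ℂ H] (q : ℝ) {n : ℕ} (f g : Fin n → H) : ℂ :=
  ∑ π : Equiv.Perm (Fin n),
    (q : ℂ) ^ inversions π * ∏ j : Fin n, ⟪f j, g (π j)⟫_ℂ

namespace QAdjAux

open Equiv

def phi {n : ℕ} (k : Fin (n + 1)) (σ : Equiv.Perm (Fin n)) : Equiv.Perm (Fin (n + 1)) :=
  (finSuccEquiv n).trans (σ.optionCongr.trans (finSuccEquiv' k).symm)

@[simp] lemma phi_zero {n : ℕ} (k : Fin (n + 1)) (σ : Equiv.Perm (Fin n)) :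
    phi k σ 0 = k := by
  simp [phi]

@[simp] lemma phi_succ {n : ℕ} (k : Fin (n + 1)) (σ : Equiv.Perm (Fin n)) (j : Fin n) :
    phi k σ j.succ = k.succAbove (σ j) := by
  simp [phi]

lemma phi_bijective {n : ℕ} :
    Function.Bijective (fun p : Fin (n + 1) × Equiv.Perm (Fin n) => phi p.1 p.2) := by
  constructor
  · rintro ⟨k, σ⟩ ⟨k', σ'⟩ h
    simp only at h
    have hk : k = k' := by
      have := congrArg (fun π : Equiv.Perm (Fin (n + 1)) => π 0) h
      simpa using this
    subst hk
    have hσ : σ = σ' := by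
      refine Equiv.ext fun j => ?_
      have := congrArg (fun π : Equiv.Perm (Fin (n + 1)) => π j.succ) h
      simp only [phi_succ] at this
      exact Fin.succAbove_right_injective this
    exact Prod.ext rfl hσ
  · intro π
    refine ⟨⟨π 0, Equiv.removeNone (((finSuccEquiv n).symm.trans π).trans (finSuccEquiv' (π 0)))⟩, ?_⟩
    set E := ((finSuccEquiv n).symm.trans π).trans (finSuccEquiv' (π 0)) with hE
    have hEsome : ∀ j : Fin n, E (some j) = finSuccEquiv' (π 0) (π j.succ) := by
      intro j; simp [hE]
    ext x
    refine Fin.cases ?_ (fun j => ?_) x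
    · simp
    · have h1 : π j.succ ≠ π 0 := fun h => (Fin.succ_ne_zero j) (π.injective h)
      obtain ⟨m, hm⟩ := Fin.exists_succAbove_eq h1
      have h2 : E (some j) = some m := by
        rw [hEsome, ← hm, finSuccEquiv'_succAbove]
      have h3 : some (Equiv.removeNone E j) = some m := by
        rw [Equiv.removeNone_some E ⟨m, h2⟩, h2]
      simp only [phi_succ]
      rw [Option.some_injective _ h3, hm]

lemma inversions_eq_sum {n : ℕ} (π : Equiv.Perm (Fin n)) :
    inversions π = ∑ i : Fin n, ∑ j : Fin n, if i < j ∧ π j < π i then 1 else 0 := by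
  rw [inversions, Finset.card_filter, Fintype.sum_prod_type]

lemma count_lt {n : ℕ} (k : Fin (n + 1)) :
    (∑ v : Fin n, if (v.castSucc : Fin (n + 1)) < k then 1 else 0) = (k : ℕ) := by
  have hk := k.is_le
  have : (∑ v : Fin n, if (v.castSucc : Fin (n + 1)) < k then 1 else 0)
      = ∑ i ∈ Finset.range n, if i < (k : ℕ) then 1 else 0 := by
    simp only [Fin.lt_def, Fin.coe_castSucc]
    exact Fin.sum_univ_eq_sum_range (fun i => if i < (k : ℕ) then 1 else 0) n
  rw [this, ← Finset.card_filter]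
  have h2 : (Finset.range n).filter (· < (k : ℕ)) = Finset.range (k : ℕ) := by
    ext i; simp only [Finset.mem_filter, Finset.mem_range]; omega
  rw [h2, Finset.card_range]

lemma inversions_phi {n : ℕ} (k : Fin (n + 1)) (σ : Equiv.Perm (Fin n)) :
    inversions (phi k σ) = (k : ℕ) + inversions σ := by
  rw [inversions_eq_sum, inversions_eq_sum σ, Fin.sum_univ_succ]
  congr 1
  · -- i = 0 row
    rw [Fin.sum_univ_succ]
    simp only [phi_zero, phi_succ, lt_self_iff_false, false_and, if_false, zero_add,
      Fin.succ_pos, true_and]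
    calc (∑ j : Fin n, if k.succAbove (σ j) < k then 1 else 0)
        = ∑ j : Fin n, if ((σ j).castSucc : Fin (n+1)) < k then 1 else 0 := by
          simp only [Fin.succAbove_lt_iff_castSucc_lt]
      _ = ∑ v : Fin n, if (v.castSucc : Fin (n+1)) < k then 1 else 0 :=
          Equiv.sum_comp σ (fun v => if (v.castSucc : Fin (n+1)) < k then 1 else 0)
      _ = (k : ℕ) := count_lt k
  · refine Finset.sum_congr rfl fun i _ => ?_
    rw [Fin.sum_univ_succ]
    simp only [phi_succ, phi_zero, Fin.not_lt_zero, false_and, if_false, zero_add,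
      Fin.succ_lt_succ_iff, Fin.succAbove_lt_succAbove_iff]

end QAdjAux

/-- The `q`-annihilator `a(e)` (with `a(e)Ω = 0` and
`a(e)(g₁⊗⋯⊗g_{n+1}) = ∑_k q^{k−1} ⟨g_k, e⟩ g₁⊗⋯ĝ_k⋯⊗g_{n+1}`) is the adjoint
of the creator `a⁺(e) : ξ ↦ e ⊗ ξ` for the `q`-inner product:
`⟨a⁺(e)(f₁⊗⋯⊗f_n), g₁⊗⋯⊗g_{n+1}⟩_q = ⟨f₁⊗⋯⊗f_n, a(e)(g₁⊗⋯⊗g_{n+1})⟩_q`,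
verified on simple tensors (represented by tuples). -/
theorem qInner_creation_adjoint_annihilation
    {H : Type*} [NormedAddCommGroup H] [InnerProductSpace ℂ H]
    (q : ℝ) (hq : |q| < 1) (e : H) {n : ℕ}
    (f : Fin n → H) (g : Fin (n + 1) → H) :
    qInner q (Fin.cons e f) g
      = ∑ k : Fin (n + 1),
          (q : ℂ) ^ (k : ℕ) * ⟪e, g k⟫_ℂ *
            qInner q f (fun j => g (k.succAbove j)) := by
  simp only [qInner]
  have hsum := Equiv.sum_comp (Equiv.ofBijective _ (QAdjAux.phi_bijective (n := n)))
      (fun π : Equiv.Perm (Fin (n + 1)) =>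
        (q : ℂ) ^ inversions π * ∏ j : Fin (n + 1), ⟪(Fin.cons e f : Fin (n+1) → H) j, g (π j)⟫_ℂ)
  rw [← hsum, Fintype.sum_prod_type]
  refine Finset.sum_congr rfl fun k _ => ?_
  rw [Finset.mul_sum]
  refine Finset.sum_congr rfl fun σ _ => ?_
  simp only [Equiv.ofBijective_apply, QAdjAux.inversions_phi, Fin.prod_univ_succ,
    Fin.cons_zero, Fin.cons_succ, QAdjAux.phi_zero, QAdjAux.phi_succ, pow_add]
  ring
end

section
/- Let M be the operator on the algebraic q-Fock space defined by MΩ = Ω and M(f₁⊗⋯⊗f_n) = ∑_{k=1}^n q^{k−1} f_k⊗f₁⊗⋯⊗f_{k−1}⊗f_{k+1}⊗⋯⊗f_n. Then for |q| < 1 and any i, the identity a_i = b_i ∘ M holds on each n-particle space, where b_i is the free (q = 0) annihilator b_i(f₁⊗⋯⊗f_n) = ⟨f₁, e_i⟩ f₂⊗⋯⊗f_n. -/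
open scoped InnerProductSpace TensorProduct
open PiTensorProduct

-- `Fin` indices start at `0`, so the paper's weight `q^{k−1}` appears as `q ^ k`.
theorem q_annihilator_eq_free_annihilator_comp_M_general
    {H : Type*} [NormedAddCommGroup H] [InnerProductSpace ℂ H]
    (q : ℝ) (e : H) (n : ℕ)
    (B : (⨂[ℂ] _ : Fin (n + 1), H) →ₗ[ℂ] ⨂[ℂ] _ : Fin n, H)
    (hB : ∀ g : Fin (n + 1) → H,
      B (tprod ℂ g) = ⟪e, g 0⟫_ℂ • tprod ℂ (fun j : Fin n => g j.succ))
    (M : (⨂[ℂ] _ : Fin (n + 1), H) →ₗ[ℂ] ⨂[ℂ] _ : Fin (n + 1), H)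
    (hM : ∀ f : Fin (n + 1) → H,
      M (tprod ℂ f) = ∑ k : Fin (n + 1), ((q : ℂ) ^ (k : ℕ)) •
        PiTensorProduct.tprod ℂ (Fin.cons (f k) (fun j : Fin n => f (k.succAbove j)))) :
    ∀ f : Fin (n + 1) → H,
      B (M (tprod ℂ f))
        = ∑ k : Fin (n + 1), ((q : ℂ) ^ (k : ℕ) * ⟪e, f k⟫_ℂ) •
            tprod ℂ (fun j : Fin n => f (k.succAbove j)) := by
  intro f
  rw [hM, map_sum]
  refine Finset.sum_congr rfl fun k _ => ?_
  rw [map_smul, hB, smul_smul]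
  simp only [Fin.cons_zero, Fin.cons_succ]

/-- On each `(n+1)`-particle space of the algebraic `q`-Fock space, the
`q`-annihilator `a(e)` factors as `a(e) = b(e) ∘ M`, where `b(e)` is the free
(`q = 0`) annihilator `b(e)(f₁⊗⋯⊗f_{n+1}) = ⟨f₁, e⟩ f₂⊗⋯⊗f_{n+1}` and `M` is
the operator
`M(f₁⊗⋯⊗f_{n+1}) = ∑_k q^{k−1} f_k ⊗ f₁ ⊗ ⋯ f̂_k ⋯ ⊗ f_{n+1}`.
Concretely, applying `B ∘ M` to a simple tensor yields the `q`-annihilator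
formula `∑_k q^{k−1} ⟨f_k, e⟩ f₁⊗⋯ f̂_k ⋯⊗f_{n+1}`. -/
theorem q_annihilator_eq_free_annihilator_comp_M
    {H : Type*} [NormedAddCommGroup H] [InnerProductSpace ℂ H]
    (q : ℝ) (hq : |q| < 1) (e : H) (n : ℕ)
    (B : (⨂[ℂ] _ : Fin (n + 1), H) →ₗ[ℂ] ⨂[ℂ] _ : Fin n, H)
    (hB : ∀ g : Fin (n + 1) → H,
      B (tprod ℂ g) = ⟪e, g 0⟫_ℂ • tprod ℂ (fun j : Fin n => g j.succ))
    (M : (⨂[ℂ] _ : Fin (n + 1), H) →ₗ[ℂ] ⨂[ℂ] _ : Fin (n + 1), H)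
    (hM : ∀ f : Fin (n + 1) → H,
      M (tprod ℂ f) = ∑ k : Fin (n + 1), ((q : ℂ) ^ (k : ℕ)) •
        PiTensorProduct.tprod ℂ (Fin.cons (f k) (fun j : Fin n => f (k.succAbove j)))) :
    ∀ f : Fin (n + 1) → H,
      B (M (tprod ℂ f))
        = ∑ k : Fin (n + 1), ((q : ℂ) ^ (k : ℕ) * ⟪e, f k⟫_ℂ) •
            tprod ℂ (fun j : Fin n => f (k.succAbove j)) :=
  q_annihilator_eq_free_annihilator_comp_M_general q e n B hB M hM
end
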